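/- Let d2 = (3n+m−2)/(4(n+m−1)) and assume either d2 < d ≤ r or r ≤ d < d2. Then n − m + 2 ≠ 0; set λ = (n − (n+m−1)d)/(n−m+2) (equivalently λ = (r−d)/(2r−1+ρ)). Then 0 ≤ λ ≤ 1/4, and the quadruple y_n = (n−1)λ − b̄_n, y_{n+m} = 2b_m + 2a_{n+m} − b̄_n − (2m−n+1)λ, y_1 = 0, y_{n+1} = b_m + 2a_{n+m} − b̄_n − (m−n+2)λ is such that (λ, y) is a solution of the four-variable system (S); in particular λ = (r−d)/(2r−1+ρ) is an eigenvalue of (S). -/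

import Mathlib

/-! Since `n - m + 2 = 4 (n + m - 1) (r - d₂)`, the eigenvalue is `λ = (r - d) / (4 (r - d₂))`,
which the case hypothesis places in `[0, 1/4]`. The identity `(n - m + 2) λ = n - ∑ aᵢ` makes
one branch of each of the four minima of (S) equal to the prescribed coordinate, and the other
branch exceeds it by a quantity that is nonnegative precisely because `0 ≤ λ ≤ 1/4`. -/

open Finset

/-- The four-variable system (S), with variables `y1 = y_1`, `yn = y_n`,
`yn1 = y_{n+1}`, `ynm = y_{n+m}`. -/
def Ssol (n m : ℕ) (a : ℕ → ℝ) (lam y1 yn yn1 ynm : ℝ) : Prop :=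
  yn = min ((1 - (a n + a (n + m))) - 2 * lam + y1 + yn1 - ynm)
      ((∑ i ∈ Finset.Icc 1 (n - 1), a i) - ((n : ℝ) - 1) * lam + y1) ∧
  ynm = min ((1 - (a n + a (n + m))) - lam + y1 + yn1 - yn)
      ((∑ i ∈ Finset.Icc (n + 1) (n + m - 1), a i) - ((m : ℝ) - 1) * lam + yn1) ∧
  y1 = min (a n - lam + (yn + ynm) / 2)
      ((∑ i ∈ Finset.Icc 1 (n - 1), (1 - a i)) - ((n : ℝ) - 1) * lam + yn) ∧
  yn1 = min (a (n + m) - lam + (yn + ynm) / 2)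
      ((∑ i ∈ Finset.Icc (n + 1) (n + m - 1), (1 - a i)) - ((m : ℝ) - 1) * lam + ynm)

theorem sum_Icc_one_add_eq {M : Type*} [AddCommMonoid M] (f : ℕ → M) {n m : ℕ}
    (hn : 1 ≤ n) (hm : 1 ≤ m) :
    ∑ i ∈ Icc 1 (n + m), f i =
      ∑ i ∈ Icc 1 (n - 1), f i + f n + (∑ i ∈ Icc (n + 1) (n + m - 1), f i + f (n + m)) := by
  obtain ⟨k, rfl⟩ := Nat.exists_eq_add_of_le' hn
  obtain ⟨l, rfl⟩ := Nat.exists_eq_add_of_le' hm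
  rw [← add_assoc, Nat.add_sub_cancel, Nat.add_sub_cancel, ← sum_Icc_succ_top (by omega),
    ← sum_Icc_succ_top (by omega)]
  simpa only [← Icc_add_one_left_eq_Ioc, zero_add] using
    (sum_Ioc_consecutive f (Nat.zero_le (k + 1)) (by omega : k + 1 ≤ k + 1 + l + 1)).symm

theorem sum_Icc_one_sub (f : ℕ → ℝ) (p q : ℕ) :
    ∑ i ∈ Icc p q, (1 - f i) = ((q + 1 - p : ℕ) : ℝ) - ∑ i ∈ Icc p q, f i := by
  simp [sum_sub_distrib]

theorem ssol_of_mul_eq_sub_sum (n m : ℕ) (hn : 1 ≤ n) (hm : 1 ≤ m) (a : ℕ → ℝ) (lam : ℝ)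
    (hkey : ((n : ℝ) - m + 2) * lam = n - ∑ i ∈ Icc 1 (n + m), a i)
    (hlam : lam ∈ Set.Icc (0 : ℝ) (1 / 4)) :
    Ssol n m a lam 0
      (((n : ℝ) - 1) * lam - (∑ i ∈ Icc 1 (n - 1), (1 - a i)))
      ((∑ i ∈ Icc (n + 1) (n + m - 1), a i) + 2 * a (n + m)
        - (∑ i ∈ Icc 1 (n - 1), (1 - a i)) - ((m : ℝ) - (n : ℝ) + 2) * lam)
      (2 * (∑ i ∈ Icc (n + 1) (n + m - 1), a i) + 2 * a (n + m)
        - (∑ i ∈ Icc 1 (n - 1), (1 - a i)) - (2 * (m : ℝ) - (n : ℝ) + 1) * lam) := by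
  obtain ⟨hlam0, hlam4⟩ := hlam
  have hn' : (1 : ℝ) ≤ n := by exact_mod_cast hn
  have hm' : (1 : ℝ) ≤ m := by exact_mod_cast hm
  have hbarn : ∑ i ∈ Icc 1 (n - 1), (1 - a i) = (n - 1 : ℝ) - ∑ i ∈ Icc 1 (n - 1), a i := by
    rw [sum_Icc_one_sub, show n - 1 + 1 - 1 = n - 1 by omega, Nat.cast_sub hn, Nat.cast_one]
  have hbarm : ∑ i ∈ Icc (n + 1) (n + m - 1), (1 - a i) =
      (m - 1 : ℝ) - ∑ i ∈ Icc (n + 1) (n + m - 1), a i := by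
    rw [sum_Icc_one_sub, show n + m - 1 + 1 - (n + 1) = m - 1 by omega, Nat.cast_sub hm,
      Nat.cast_one]
  rw [sum_Icc_one_add_eq a hn hm] at hkey
  unfold Ssol
  rw [hbarn, hbarm]
  -- In each equation the inactive branch exceeds the active one by, respectively,
  -- `(n - 1)(1 - 2λ)`, `λ`, `1 - 4λ` and `(m - 1)(1 - 2λ)`.
  refine ⟨?_, ?_, ?_, ?_⟩
  · rw [min_eq_left (by nlinarith)]; linarith
  · rw [min_eq_right (by linarith)]; ring
  · rw [min_eq_right (by linarith)]; ring
  · rw [min_eq_left (by nlinarith)]; linarith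

theorem div_four_mul_sub_mem_Icc {r d d2 : ℝ} (h : (d2 < d ∧ d ≤ r) ∨ (r ≤ d ∧ d < d2)) :
    (r - d) / (4 * (r - d2)) ∈ Set.Icc (0 : ℝ) (1 / 4) := by
  rcases h with ⟨hd2d, hdr⟩ | ⟨hrd, hdd2⟩
  · have hpos : 0 < 4 * (r - d2) := by linarith
    exact ⟨div_nonneg (by linarith) hpos.le, by rw [div_le_iff₀ hpos]; linarith⟩
  · have hneg : 4 * (r - d2) < 0 := by linarith
    exact ⟨div_nonneg_of_nonpos (by linarith) hneg.le, by rw [div_le_iff_of_neg hneg]; linarith⟩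

theorem stmt8_general (n m : ℕ) (hn : 2 ≤ n) (hm : 2 ≤ m) (a : ℕ → ℝ)
    (d r d2 : ℝ) (hd : d = (∑ i ∈ Finset.Icc 1 (n + m), a i) / ((n : ℝ) + (m : ℝ) - 1))
    (hr : r = (n : ℝ) / ((n : ℝ) + (m : ℝ) - 1))
    (hd2 : d2 = (3 * (n : ℝ) + (m : ℝ) - 2) / (4 * ((n : ℝ) + (m : ℝ) - 1)))
    (hcase : (d2 < d ∧ d ≤ r) ∨ (r ≤ d ∧ d < d2))
    (lam : ℝ) (hlam : lam = ((n : ℝ) - ((n : ℝ) + (m : ℝ) - 1) * d) / ((n : ℝ) - (m : ℝ) + 2)) :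
    (n : ℝ) - (m : ℝ) + 2 ≠ 0 ∧ 0 ≤ lam ∧ lam ≤ 1 / 4 ∧
    Ssol n m a lam 0
      (((n : ℝ) - 1) * lam - (∑ i ∈ Finset.Icc 1 (n - 1), (1 - a i)))
      ((∑ i ∈ Finset.Icc (n + 1) (n + m - 1), a i) + 2 * a (n + m)
        - (∑ i ∈ Finset.Icc 1 (n - 1), (1 - a i)) - ((m : ℝ) - (n : ℝ) + 2) * lam)
      (2 * (∑ i ∈ Finset.Icc (n + 1) (n + m - 1), a i) + 2 * a (n + m)
        - (∑ i ∈ Finset.Icc 1 (n - 1), (1 - a i)) - (2 * (m : ℝ) - (n : ℝ) + 1) * lam) := by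
  have hN : (0 : ℝ) < n + m - 1 := by
    have : (2 : ℝ) ≤ n := by exact_mod_cast hn
    linarith [m.cast_nonneg (α := ℝ)]
  have hrd2 : r - d2 ≠ 0 := by
    rw [sub_ne_zero]
    rintro rfl
    rcases hcase with ⟨h1, h2⟩ | ⟨h1, h2⟩ <;> linarith
  have hgap : (n : ℝ) - m + 2 = 4 * (n + m - 1) * (r - d2) := by
    rw [hr, hd2]; field_simp; ring
  have hne : (n : ℝ) - m + 2 ≠ 0 := by
    rw [hgap]; exact mul_ne_zero (by positivity) hrd2
  have hkey : ((n : ℝ) - m + 2) * lam = n - ∑ i ∈ Icc 1 (n + m), a i := by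
    rw [hlam, mul_div_cancel₀ _ hne, hd, mul_div_cancel₀ _ hN.ne']
  have hbounds : lam ∈ Set.Icc (0 : ℝ) (1 / 4) := by
    convert div_four_mul_sub_mem_Icc hcase using 1
    rw [hlam, hgap, hr]; field_simp
  exact ⟨hne, hbounds.1, hbounds.2,
    ssol_of_mul_eq_sub_sum n m (by omega) (by omega) a lam hkey hbounds⟩

theorem stmt8 (n m : ℕ) (hn : 2 ≤ n) (hm : 2 ≤ m) (a : ℕ → ℝ)
    (ha : ∀ i : ℕ, 1 ≤ i → i ≤ n + m → 0 ≤ a i ∧ a i ≤ 1)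
    (hprio : a n + a (n + m) ≤ 1)
    (d r d2 : ℝ) (hd : d = (∑ i ∈ Finset.Icc 1 (n + m), a i) / ((n : ℝ) + (m : ℝ) - 1))
    (hr : r = (n : ℝ) / ((n : ℝ) + (m : ℝ) - 1))
    (hd2 : d2 = (3 * (n : ℝ) + (m : ℝ) - 2) / (4 * ((n : ℝ) + (m : ℝ) - 1)))
    (hcase : (d2 < d ∧ d ≤ r) ∨ (r ≤ d ∧ d < d2))
    (lam : ℝ) (hlam : lam = ((n : ℝ) - ((n : ℝ) + (m : ℝ) - 1) * d) / ((n : ℝ) - (m : ℝ) + 2)) :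
    (n : ℝ) - (m : ℝ) + 2 ≠ 0 ∧ 0 ≤ lam ∧ lam ≤ 1 / 4 ∧
    Ssol n m a lam 0
      (((n : ℝ) - 1) * lam - (∑ i ∈ Finset.Icc 1 (n - 1), (1 - a i)))
      ((∑ i ∈ Finset.Icc (n + 1) (n + m - 1), a i) + 2 * a (n + m)
        - (∑ i ∈ Finset.Icc 1 (n - 1), (1 - a i)) - ((m : ℝ) - (n : ℝ) + 2) * lam)
      (2 * (∑ i ∈ Finset.Icc (n + 1) (n + m - 1), a i) + 2 * a (n + m)
        - (∑ i ∈ Finset.Icc 1 (n - 1), (1 - a i)) - (2 * (m : ℝ) - (n : ℝ) + 1) * lam) :=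
  stmt8_general n m hn hm a d r d2 hd hr hd2 hcase lam hlam
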